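/- arXiv:1803.04639 — 2 statements merged into one kernel-verified Lean document; each statement's English description precedes it below -/
import Mathlib

section
/- Let M be a type, let N ≥ 1, let L_0, L_1, …, L_{N-1} be finite nonempty subsets of M, let π : M → ℝ be nonnegative, and let P : M → M → ℝ be nonnegative. For a tuple l = (l_0, …, l_{j}) define its weight W_j(l) = π(l_0) · Π_{k=1}^{j} P(l_{k-1}, l_k). Define T : for m ∈ M, T(0, m) = π(m), and for 1 ≤ j ≤ N-1, T(j, m) = max_{m' ∈ L_{j-1}} P(m', m) · T(j-1, m'). Then for every 0 ≤ j ≤ N-1 and every m ∈ M, T(j, m) equals the maximum of W_j(l_0, …, l_{j-1}, m) over all (l_0, …, l_{j-1}) ∈ L_0 × L_1 × … × L_{j-1}. -/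
/-- The dynamic-programming function `T` of the context list decoding algorithm (CLDA):
`T(0, m) = π(m)` and, for `j ≥ 1`,
`T(j, m) = max_{m' ∈ L_{j-1}} P(m', m) · T(j-1, m')`. -/
def cldaT {M : Type*} (π : M → ℝ) (P : M → M → ℝ)
    (L : ℕ → Finset M) (hL : ∀ j, (L j).Nonempty) : ℕ → M → ℝ
  | 0, m => π m
  | j + 1, m => (L j).sup' (hL j) fun m' => P m' m * cldaT π P L hL j m'

/-!
By induction on `j`: a tuple in `L_0 × ⋯ × L_j` is a tuple in `L_0 × ⋯ × L_{j-1}` followed by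
its last entry `m' ∈ L_j`, so the maximum over it splits into a maximum over `m'` of a maximum
over the shorter tuples. Appending `m` to a sentence ending in `m'` multiplies its weight by the
factor `P(m', m) ≥ 0`, which commutes with the inner maximum, and the inner maximum is `T(j, m')`
by the induction hypothesis.
-/

open Finset Fintype

theorem Finset.sup'_piFinset_snoc {α β : Type*} [SemilatticeSup α] {n : ℕ}
    (s : Fin (n + 1) → Finset β) (hs : ∀ i, (s i).Nonempty) (f : (Fin (n + 1) → β) → α) :
    (piFinset s).sup' (piFinset_nonempty.2 hs) f =
      (s (Fin.last n)).sup' (hs _) fun b =>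
        (piFinset fun i => s i.castSucc).sup' (piFinset_nonempty.2 fun _ => hs _)
          fun l => f (Fin.snoc l b) :=
  eq_of_forall_ge_iff fun a => by
    simp only [Finset.sup'_le_iff]
    refine ⟨fun h b hb l hl => h _ ?_, fun h t ht => ?_⟩
    · rw [Fin.mem_piFinset_iff_last_init, Fin.init_snoc, Fin.snoc_last]
      exact ⟨hb, hl⟩
    · rw [Fin.mem_piFinset_iff_last_init] at ht
      simpa using h _ ht.1 _ ht.2

section SentenceWeight

variable {M R : Type*} [CommMonoid R] (π : M → R) (P : M → M → R)

def sentenceWeight {n : ℕ} (t : Fin (n + 1) → M) : R :=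
  π (t 0) * ∏ k : Fin n, P (t k.castSucc) (t k.succ)

theorem sentenceWeight_fin_one (t : Fin 1 → M) : sentenceWeight π P t = π (t 0) := by
  simp [sentenceWeight]

theorem sentenceWeight_snoc {n : ℕ} (t : Fin (n + 1) → M) (m : M) :
    sentenceWeight π P (Fin.snoc t m : Fin (n + 2) → M) =
      sentenceWeight π P t * P (t (Fin.last n)) m := by
  rw [sentenceWeight, sentenceWeight, Fin.prod_univ_castSucc, mul_assoc]
  have snoc_zero : (Fin.snoc t m : Fin (n + 2) → M) 0 = t 0 := Fin.snoc_castSucc (i := 0) ..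
  simp only [snoc_zero, Fin.snoc_castSucc, Fin.succ_last, Fin.snoc_last, Fin.succ_castSucc]

end SentenceWeight

theorem cldaT_eq_max_sentence_weight_general
    (M : Type*)
    (L : ℕ → Finset M) (hL : ∀ j, (L j).Nonempty)
    (π : M → ℝ) (P : M → M → ℝ)
    (hP0 : ∀ i j, 0 ≤ P i j)
    (j : ℕ) (m : M) :
    cldaT π P L hL j m
    = (Fintype.piFinset fun k : Fin j => L k).sup'
        (Fintype.piFinset_nonempty.mpr fun k => hL k)
        (fun l =>
          let t : Fin (j + 1) → M := Fin.snoc l m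
          π (t 0) * ∏ k : Fin j, P (t k.castSucc) (t k.succ)) := by
  change _ = (piFinset fun k : Fin j => L k).sup' _ fun l => sentenceWeight π P (Fin.snoc l m)
  induction j generalizing m with
  | zero => simp only [cldaT, sentenceWeight_fin_one, Fin.snoc_zero, sup'_const]
  | succ j ih =>
    rw [sup'_piFinset_snoc (fun i : Fin (j + 1) => L i) fun i => hL i, cldaT]
    refine sup'_congr _ rfl fun m' _ => ?_
    rw [ih, mul₀_sup' (hP0 m' m)]
    refine sup'_congr _ rfl fun l _ => ?_
    rw [sentenceWeight_snoc, Fin.snoc_last, mul_comm]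

/-- Let `M` be a type, `N ≥ 1`, let `L_0, L_1, …` be finite nonempty
subsets of `M`, let `π : M → ℝ` and `P : M → M → ℝ` be nonnegative.  The weight of a
tuple `(l_0, …, l_j)` is `W_j(l) = π(l_0) · Π_{k=1}^{j} P(l_{k-1}, l_k)`.  Then for every
`0 ≤ j ≤ N - 1` and every `m ∈ M`, `T(j, m)` equals the maximum of
`W_j(l_0, …, l_{j-1}, m)` over all `(l_0, …, l_{j-1}) ∈ L_0 × L_1 × … × L_{j-1}`. -/
theorem cldaT_eq_max_sentence_weight
    (M : Type*) (N : ℕ) (hN : 1 ≤ N)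
    (L : ℕ → Finset M) (hL : ∀ j, (L j).Nonempty)
    (π : M → ℝ) (P : M → M → ℝ)
    (hπ0 : ∀ i, 0 ≤ π i) (hP0 : ∀ i j, 0 ≤ P i j)
    (j : ℕ) (hj : j ≤ N - 1) (m : M) :
    cldaT π P L hL j m
    = (Fintype.piFinset fun k : Fin j => L k).sup'
        (Fintype.piFinset_nonempty.mpr fun k => hL k)
        (fun l =>
          let t : Fin (j + 1) → M := Fin.snoc l m
          π (t 0) * ∏ k : Fin j, P (t k.castSucc) (t k.succ)) :=
  cldaT_eq_max_sentence_weight_general M L hL π P hP0 j m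
end

section
/- Let M be a type, let N ≥ 1, let L_0, L_1, …, L_{N-1} be finite nonempty subsets of M, let π : M → ℝ be nonnegative, and let P : M → M → ℝ be nonnegative. Define T by T(0, m) = π(m) and T(j, m) = max_{m' ∈ L_{j-1}} P(m', m) · T(j-1, m') for 1 ≤ j ≤ N-1. Then max_{m ∈ L_{N-1}} T(N-1, m) equals the maximum over all tuples (l_0, l_1, …, l_{N-1}) ∈ L_0 × L_1 × … × L_{N-1} of the codeword sentence weight π(l_0) · Π_{k=1}^{N-1} P(l_{k-1}, l_k); that is, the dynamic programming of the context list decoding algorithm computes the weight of the most probable N-codeword sentence in the lists. -/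
/-- The weight of a sentence `f` of `n + 1` codewords. -/
def cldaWeight {M : Type*} (π : M → ℝ) (P : M → M → ℝ) (n : ℕ)
    (f : Fin (n + 1) → M) : ℝ :=
  π (f 0) * ∏ k : Fin n, P (f k.castSucc) (f k.succ)

/-- Swapping a sup over the last coordinate with a sup over the initial segment. -/
lemma clda_sup'_snoc {M : Type*} (L : ℕ → Finset M) (hL : ∀ j, (L j).Nonempty)
    (n : ℕ) (F : (Fin (n + 1) → M) → ℝ) :
    (L n).sup' (hL n) (fun m =>
      (Fintype.piFinset fun k : Fin n => L k).sup'
        (Fintype.piFinset_nonempty.mpr fun k => hL k) (fun l => F (Fin.snoc l m)))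
    = (Fintype.piFinset fun k : Fin (n + 1) => L k).sup'
        (Fintype.piFinset_nonempty.mpr fun k => hL k) F := by
  apply le_antisymm
  · apply Finset.sup'_le
    intro m hm
    apply Finset.sup'_le
    intro l hl
    apply Finset.le_sup'
    rw [Fintype.mem_piFinset]
    intro k
    refine Fin.lastCases ?_ ?_ k
    · simpa using hm
    · intro i
      simpa using (Fintype.mem_piFinset.mp hl) i
  · apply Finset.sup'_le
    intro f hf
    have h1 : f (Fin.last n) ∈ L n := by
      simpa using (Fintype.mem_piFinset.mp hf) (Fin.last n)
    have h2 : Fin.init f ∈ Fintype.piFinset fun k : Fin n => L k := by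
      rw [Fintype.mem_piFinset]
      intro i
      simpa [Fin.init] using (Fintype.mem_piFinset.mp hf) i.castSucc
    calc F f = F (Fin.snoc (Fin.init f) (f (Fin.last n))) := by rw [Fin.snoc_init_self]
      _ ≤ _ := Finset.le_sup'_of_le _ h1
        (Finset.le_sup' (fun l => F (Fin.snoc l (f (Fin.last n)))) h2)

lemma cldaT_eq_sup' {M : Type*} (π : M → ℝ) (P : M → M → ℝ)
    (L : ℕ → Finset M) (hL : ∀ j, (L j).Nonempty)
    (hπ0 : ∀ i, 0 ≤ π i) (hP0 : ∀ i j, 0 ≤ P i j) :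
    ∀ (n : ℕ) (m : M),
      cldaT π P L hL n m =
        (Fintype.piFinset fun k : Fin n => L k).sup'
          (Fintype.piFinset_nonempty.mpr fun k => hL k)
          (fun l => cldaWeight π P n (Fin.snoc l m)) := by
  intro n
  induction n with
  | zero =>
    intro m
    have : (fun l : Fin 0 → M => cldaWeight π P 0 (Fin.snoc l m)) = fun _ => π m := by
      funext l
      simp [cldaWeight, Fin.snoc]
    rw [this, Finset.sup'_const]
    rfl
  | succ n ih =>
    intro m
    have step : cldaT π P L hL (n + 1) m
        = (L n).sup' (hL n) (fun m' => P m' m * cldaT π P L hL n m') := rfl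
    rw [step]
    rw [← clda_sup'_snoc L hL n (fun l' => cldaWeight π P (n + 1) (Fin.snoc l' m))]
    apply Finset.sup'_congr _ rfl
    intro m' _
    rw [ih m']
    have hmul : P m' m *
        (Fintype.piFinset fun k : Fin n => L k).sup'
          (Fintype.piFinset_nonempty.mpr fun k => hL k)
          (fun l => cldaWeight π P n (Fin.snoc l m'))
        = (Fintype.piFinset fun k : Fin n => L k).sup'
          (Fintype.piFinset_nonempty.mpr fun k => hL k)
          (fun l => P m' m * cldaWeight π P n (Fin.snoc l m')) := by
      exact Finset.comp_sup'_eq_sup'_comp _ (fun x => P m' m * x)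
        (fun x y => mul_max_of_nonneg x y (hP0 m' m))
    rw [hmul]
    apply Finset.sup'_congr _ rfl
    intro l _
    -- show P m' m * cldaWeight n (snoc l m') = cldaWeight (n+1) (snoc (snoc l m') m)
    show P m' m * cldaWeight π P n (Fin.snoc l m')
        = cldaWeight π P (n + 1) (Fin.snoc (Fin.snoc l m') m)
    unfold cldaWeight
    rw [Fin.prod_univ_castSucc (n := n)]
    have h0 : (Fin.snoc (Fin.snoc l m') m : Fin (n + 2) → M) 0
        = (Fin.snoc l m' : Fin (n + 1) → M) 0 := by
      rw [show (0 : Fin (n + 2)) = Fin.castSucc 0 by simp, Fin.snoc_castSucc]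
    simp only [h0, Fin.snoc_castSucc, Fin.succ_castSucc, Fin.snoc_last, Fin.succ_last]
    ring

/-- Let `M` be a type, `N ≥ 1`, let `L_0, L_1, …` be finite nonempty
subsets of `M`, let `π : M → ℝ` and `P : M → M → ℝ` be nonnegative, and let `T` be the
CLDA dynamic-programming function.  Then `max_{m ∈ L_{N-1}} T(N-1, m)` equals the
maximum over all tuples `(l_0, …, l_{N-1}) ∈ L_0 × L_1 × … × L_{N-1}` of the codeword
sentence weight `π(l_0) · Π_{k=1}^{N-1} P(l_{k-1}, l_k)`; the dynamic programming of
CLDA computes the weight of the most probable `N`-codeword sentence in the lists. -/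
theorem clda_computes_max_sentence_weight
    (M : Type*) (N : ℕ) (hN : 1 ≤ N)
    (L : ℕ → Finset M) (hL : ∀ j, (L j).Nonempty)
    (π : M → ℝ) (P : M → M → ℝ)
    (hπ0 : ∀ i, 0 ≤ π i) (hP0 : ∀ i j, 0 ≤ P i j) :
    (L (N - 1)).sup' (hL (N - 1)) (fun m => cldaT π P L hL (N - 1) m)
    = (Fintype.piFinset fun k : Fin N => L k).sup'
        (Fintype.piFinset_nonempty.mpr fun k => hL k)
        (fun l => π (l ⟨0, hN⟩)
          * ∏ k : Fin (N - 1),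
              P (l ⟨k.1, by have := k.2; omega⟩)
                (l ⟨k.1 + 1, by have := k.2; omega⟩)) := by
  obtain ⟨n, rfl⟩ : ∃ n, N = n + 1 := ⟨N - 1, (Nat.succ_pred_eq_of_pos hN).symm⟩
  show (L n).sup' (hL n) (fun m => cldaT π P L hL n m)
    = (Fintype.piFinset fun k : Fin (n + 1) => L k).sup'
        (Fintype.piFinset_nonempty.mpr fun k => hL k) (cldaWeight π P n)
  simp only [cldaT_eq_sup' π P L hL hπ0 hP0]
  exact clda_sup'_snoc L hL n (cldaWeight π P n)
end
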